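/- arXiv:math/0110006 — 2 statements merged into one kernel-verified Lean document; each statement's English description precedes it below -/
import Mathlib

section
/- Let p be an odd prime and let n, k be natural numbers with 0 < k < p, k \equiv n+1 \pmod 2 and n \ge k-1. Then d_p(n,k) > 0. -/
/-- `binZ n j` is the binomial coefficient `n choose j` for `j : ℤ`, which is `0`
unless `0 ≤ j ≤ n`. -/
def binZ (n : ℕ) (j : ℤ) : ℤ := if 0 ≤ j then (n.choose j.toNat : ℤ) else 0

/-- `catC n j = C(n,j) = binom(n,j) - binom(n,j-1)`. -/
def catC (n : ℕ) (j : ℤ) : ℤ := binZ n j - binZ n (j - 1)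

/-- `dP p n k = d_p(n,k) = ∑_{s ∈ ℤ} C(n, (n+1-k)/2 + s p)` when `k ≡ n+1 (mod 2)`,
and `0` otherwise. -/
noncomputable def dP (p n k : ℕ) : ℤ :=
  if k % 2 = (n + 1) % 2 then ∑ᶠ s : ℤ, catC n (((n : ℤ) + 1 - k) / 2 + s * p) else 0

/-!
`C(n, j)` is antisymmetric under the reflection `j ↦ n + 1 - j` and satisfies Pascal's rule, so
`d_p(n+1, k) = d_p(n, k-1) + d_p(n, k+1)`, and `d_p(n, ·)` vanishes at the walls `k = 0` and
`k = p`: there the reflection becomes an involution `s ↦ c - s` of the summation index that negates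
every term. Starting from `d_p(0, k) = [k = 1]` for `k < p`, induction on `n` gives `d_p(n, k) ≥ 0`
for `k ≤ p` (it counts `±1` walks from `1` to `k` between the walls), and then `d_p(n+1, k) > 0`
from `d_p(n, k-1) > 0`, or from `d_p(n, 2) > 0` when `k = 1`, which is where `2 < p` is needed.
-/

section binZ

lemma binZ_of_neg {n : ℕ} {j : ℤ} (h : j < 0) : binZ n j = 0 := by
  simp [binZ, not_le.mpr h]

lemma binZ_of_lt {n : ℕ} {j : ℤ} (h : (n : ℤ) < j) : binZ n j = 0 := by
  have h0 : 0 ≤ j := (Int.natCast_nonneg n).trans h.le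
  simp [binZ, h0, Nat.choose_eq_zero_of_lt (by omega : n < j.toNat)]

lemma binZ_sub (n : ℕ) (j : ℤ) : binZ n ((n : ℤ) - j) = binZ n j := by
  rcases lt_or_ge j 0 with h | h
  · rw [binZ_of_neg h, binZ_of_lt (by omega)]
  rcases le_or_gt j n with h' | h'
  · have hjn : j.toNat ≤ n := by omega
    have hsub : ((n : ℤ) - j).toNat = n - j.toNat := by omega
    rw [binZ, binZ, if_pos (sub_nonneg.mpr h'), if_pos h, hsub, Nat.choose_symm hjn]
  · rw [binZ_of_lt h', binZ_of_neg (by omega)]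

lemma binZ_succ (n : ℕ) (j : ℤ) : binZ (n + 1) j = binZ n j + binZ n (j - 1) := by
  rcases lt_or_ge j 0 with h | h
  · rw [binZ_of_neg h, binZ_of_neg h, binZ_of_neg (by omega), add_zero]
  rcases h.eq_or_lt with rfl | h
  · simp [binZ]
  obtain ⟨t, ht⟩ : ∃ t : ℕ, j.toNat = t + 1 := ⟨j.toNat - 1, by omega⟩
  have h1 : (0 : ℤ) ≤ j - 1 := by omega
  have h2 : (j - 1).toNat = t := by omega
  simp only [binZ, if_pos h.le, if_pos h1, ht, h2, Nat.choose_succ_succ, Nat.cast_add, add_comm]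

end binZ

section catC

lemma catC_eq_zero {n : ℕ} {j : ℤ} (h : j < 0 ∨ (n : ℤ) + 1 < j) : catC n j = 0 := by
  rcases h with h | h
  · rw [catC, binZ_of_neg h, binZ_of_neg (by omega), sub_zero]
  · rw [catC, binZ_of_lt (by omega), binZ_of_lt (by omega), sub_zero]

lemma catC_zero_zero : catC 0 0 = 1 := by
  simp [catC, binZ]

lemma catC_reflect (n : ℕ) (j : ℤ) : catC n ((n : ℤ) + 1 - j) = -catC n j := by
  have e1 : (n : ℤ) + 1 - j = n - (j - 1) := by ring
  have e2 : (n : ℤ) + 1 - j - 1 = n - j := by ring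
  rw [catC, catC, e2, e1, binZ_sub, binZ_sub, neg_sub]

lemma catC_succ (n : ℕ) (j : ℤ) : catC (n + 1) j = catC n j + catC n (j - 1) := by
  rw [catC, catC, catC, binZ_succ, binZ_succ]
  ring

end catC

section foldedCatC

noncomputable def foldedCatC (p : ℤ) (n : ℕ) (m : ℤ) : ℤ := ∑ᶠ s : ℤ, catC n (m + s * p)

variable {p : ℤ}

lemma support_catC_add_mul_finite (hp : p ≠ 0) (n : ℕ) (m : ℤ) :
    (Function.support fun s : ℤ => catC n (m + s * p)).Finite := by
  refine ((Set.finite_Icc (0 : ℤ) (n + 1)).preimage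
    (f := fun s : ℤ => m + s * p) fun a _ b _ hab => ?_).subset fun s hs => ?_
  · exact mul_right_cancel₀ hp (add_left_cancel hab)
  · by_contra hs'
    simp only [Set.mem_preimage, Set.mem_Icc] at hs'
    exact hs (catC_eq_zero (by omega))

lemma foldedCatC_succ (hp : p ≠ 0) (n : ℕ) (m : ℤ) :
    foldedCatC p (n + 1) m = foldedCatC p n m + foldedCatC p n (m - 1) := by
  rw [foldedCatC, foldedCatC, foldedCatC,
    ← finsum_add_distrib (support_catC_add_mul_finite hp n m)
      (support_catC_add_mul_finite hp n (m - 1))]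
  exact finsum_congr fun s => by rw [catC_succ, sub_add_eq_add_sub]

lemma foldedCatC_eq_zero {n : ℕ} {m : ℤ} (c : ℤ) (hm : 2 * m = n + 1 - c * p) :
    foldedCatC p n m = 0 := by
  have hneg : ∀ s, catC n (m + (c - s) * p) = -catC n (m + s * p) := fun s => by
    rw [← catC_reflect]
    congr 1
    linear_combination hm
  have h := finsum_comp_equiv (Equiv.subLeft c) (f := fun s => catC n (m + s * p))
  simp only [Equiv.subLeft_apply, hneg, finsum_neg_distrib] at h
  rw [foldedCatC]
  linarith

end foldedCatC

section dP

variable {p : ℕ}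

lemma dP_of_parity {n k : ℕ} (h : k % 2 = (n + 1) % 2) :
    dP p n k = foldedCatC p n (((n : ℤ) + 1 - k) / 2) := by
  rw [dP, if_pos h, foldedCatC]

lemma dP_of_not_parity {n k : ℕ} (h : ¬k % 2 = (n + 1) % 2) : dP p n k = 0 := by
  rw [dP, if_neg h]

lemma dP_left_wall (n : ℕ) : dP p n 0 = 0 := by
  by_cases h : 0 % 2 = (n + 1) % 2
  · exact (dP_of_parity h).trans (foldedCatC_eq_zero 0 (by omega))
  · exact dP_of_not_parity h

lemma dP_right_wall (n : ℕ) : dP p n p = 0 := by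
  by_cases h : p % 2 = (n + 1) % 2
  · exact (dP_of_parity h).trans (foldedCatC_eq_zero 1 (by omega))
  · exact dP_of_not_parity h

lemma dP_succ (hp : p ≠ 0) (n : ℕ) {k : ℕ} (hk : 0 < k) :
    dP p (n + 1) k = dP p n (k - 1) + dP p n (k + 1) := by
  by_cases h : k % 2 = (n + 1 + 1) % 2
  · have hM : (((n + 1 : ℕ) : ℤ) + 1 - k) / 2 = ((n : ℤ) + 1 - (k - 1 : ℕ)) / 2 := by omega
    have hM' : ((n : ℤ) + 1 - (k + 1 : ℕ)) / 2 = ((n : ℤ) + 1 - (k - 1 : ℕ)) / 2 - 1 := by omega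
    rw [dP_of_parity h, dP_of_parity (by omega), dP_of_parity (by omega), hM, hM']
    exact foldedCatC_succ (Int.natCast_ne_zero.mpr hp) n _
  · rw [dP_of_not_parity h, dP_of_not_parity (by omega), dP_of_not_parity (by omega), add_zero]

lemma dP_zero_left {k : ℕ} (hkp : k < p) : dP p 0 k = if k = 1 then 1 else 0 := by
  by_cases h : k % 2 = (0 + 1) % 2
  swap
  · rw [dP_of_not_parity h, if_neg (by omega)]
  rw [dP_of_parity h, foldedCatC, finsum_eq_single _ 0 fun s hs => catC_eq_zero ?_]
  · split_ifs with hk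
    · subst hk
      simpa using catC_zero_zero
    · exact catC_eq_zero (by omega)
  · -- `2 (m + s p) = 1 - k + 2 s p` with `0 < k < p` cannot lie in `[0, 2]` unless `s = 0`.
    rcases lt_or_gt_of_ne hs with hs | hs
    · have : s * (p : ℤ) ≤ -p := by nlinarith
      omega
    · have : (p : ℤ) ≤ s * p := by nlinarith
      omega

lemma dP_nonneg (hp : p ≠ 0) (n : ℕ) {k : ℕ} (hkp : k ≤ p) : 0 ≤ dP p n k := by
  induction n generalizing k with
  | zero =>
    rcases hkp.lt_or_eq with hkp | rfl
    · rw [dP_zero_left hkp]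
      split_ifs <;> norm_num
    · rw [dP_right_wall]
  | succ n ih =>
    rcases Nat.eq_zero_or_pos k with rfl | hk
    · rw [dP_left_wall]
    rcases hkp.lt_or_eq with hkp | rfl
    · rw [dP_succ hp n hk]
      exact add_nonneg (ih (by omega)) (ih hkp)
    · rw [dP_right_wall]

lemma dP_pos_of_two_lt (hp : 2 < p) (n : ℕ) {k : ℕ} (hk : 0 < k) (hkp : k < p)
    (hpar : k % 2 = (n + 1) % 2) (hkn : k - 1 ≤ n) : 0 < dP p n k := by
  induction n generalizing k with
  | zero =>
    rw [dP_zero_left hkp, if_pos (by omega)]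
    exact one_pos
  | succ n ih =>
    rw [dP_succ (by omega) n hk]
    rcases eq_or_ne k 1 with rfl | hk1
    · rw [Nat.sub_self, dP_left_wall, zero_add]
      exact ih (by omega) hp (by omega) (by omega)
    · exact add_pos_of_pos_of_nonneg (ih (by omega) (by omega) (by omega) (by omega))
        (dP_nonneg (by omega) n hkp)

end dP

theorem dP_pos_general (p : ℕ) (hodd : Odd p) (n k : ℕ)
    (hk0 : 0 < k) (hkp : k < p) (hpar : k % 2 = (n + 1) % 2) (hnk : k - 1 ≤ n) :
    0 < dP p n k := by
  have hp : 2 < p := by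
    obtain ⟨m, rfl⟩ := hodd
    omega
  exact dP_pos_of_two_lt hp n hk0 hkp hpar hnk

/-- For an odd prime `p` and `0 < k < p` with `k ≡ n+1 (mod 2)` and `n ≥ k-1`:
`d_p(n,k) > 0`. -/
theorem dP_pos (p : ℕ) (hp : p.Prime) (hodd : Odd p) (n k : ℕ)
    (hk0 : 0 < k) (hkp : k < p) (hpar : k % 2 = (n + 1) % 2) (hnk : k - 1 ≤ n) :
    0 < dP p n k :=
  dP_pos_general p hodd n k hk0 hkp hpar hnk
end

section
/- Let p be an odd prime and c a positive integer whose digit c_0 = c \bmod p is nonzero and which has some nonzero digit c_j with j \ge 1; set k = \min\{j \ge 1 : c_j \ne 0\} and c' = c - 2c_0. Then for every natural number b, the map I \mapsto I \setminus \{0, \dots, k-1\} restricts to a bijection from \{I \text{ finite, } c'\text{-admissible}, 0 \in I, \delta_{c'}(I) \le b + c_0\} onto \{J \text{ finite, } c\text{-admissible}, 0 \notin J, \delta_c(J) \le b\}. -/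
/-- `digit p c i` is the `i`-th base-`p` digit of `c`. -/
def digit (p c i : ℕ) : ℕ := c / p ^ i % p

/-- A finite set `I ⊆ ℕ` is `c`-admissible (for the base-`p` digits of `c`) if
(a) for every `i ∈ I` with `i = 0` or `i-1 ∉ I` one has `c_i ≠ 0`, and
(b) for every `i ∉ I` with `i ≥ 1` and `i-1 ∈ I` one has `c_i ≠ p-1`. -/
def IsAdmissible (p c : ℕ) (I : Finset ℕ) : Prop :=
  (∀ i ∈ I, (i = 0 ∨ i - 1 ∉ I) → digit p c i ≠ 0) ∧
  (∀ i : ℕ, i ∉ I → 1 ≤ i → i - 1 ∈ I → digit p c i ≠ p - 1)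

/-- `δ_c(I) = ∑_{i ∈ I} (p-1-c_i) p^i + ∑_{i ∈ I, i=0 ∨ i-1 ∉ I} p^i`. -/
def deltaC (p c : ℕ) (I : Finset ℕ) : ℕ :=
  (∑ i ∈ I, (p - 1 - digit p c i) * p ^ i) +
    ∑ i ∈ I.filter (fun i => i = 0 ∨ i - 1 ∉ I), p ^ i

/-! Write `c = p^k N + c₀` with `p ∤ N`. Then `c - 2c₀ = p^k (N - 1) + (p^k - c₀)`, so its digits
are `p - c₀` at `0`, `p - 1` at `1, …, k-1`, `c_k - 1` at `k`, and those of `c` above `k`.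
A `(c - 2c₀)`-admissible set containing `0` therefore contains all of `0, …, k-1` (a run may
not end before a digit `p - 1`), while a `c`-admissible set avoiding `0` has no element below `k`
(a run may not start at a digit `0`). Hence `J ↦ J ∪ {0, …, k-1}` is the inverse map, and it
preserves admissibility. In `δ`, the new run `{0, …, k-1}` contributes `c₀`; if `k ∈ J`, the run
starting at `k` is absorbed into it, and the lost `p^k` is exactly regained from the lowered
digit at `k`. -/

open Finset

lemma digit_lt {p : ℕ} (hp : 0 < p) (c i : ℕ) : digit p c i < p :=
  Nat.mod_lt _ hp

lemma pos_of_digit_ne_zero {p c k : ℕ} (hk : k ≠ 0) (h : digit p c k ≠ 0) : 0 < p := by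
  refine Nat.pos_of_ne_zero fun hp => h ?_
  simp [digit, hp, hk]

lemma digit_pow_mul_add_of_lt {p k r i : ℕ} (M : ℕ) (hr : r < p ^ k) (hi : i < k) :
    digit p (p ^ k * M + r) i = digit p r i := by
  have hp : 0 < p := Nat.pos_of_ne_zero fun h => by simp [h, Nat.ne_zero_of_lt hi] at hr
  have hpk : p ^ k = p ^ i * (p * p ^ (k - i - 1)) := by
    rw [← pow_succ', ← pow_add]; congr 1; omega
  rw [digit, digit, hpk, mul_assoc, Nat.mul_add_div (by positivity), mul_assoc, Nat.mul_add_mod]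

lemma digit_pow_mul_add_of_le {p k r i : ℕ} (M : ℕ) (hr : r < p ^ k) (hi : k ≤ i) :
    digit p (p ^ k * M + r) i = digit p M (i - k) := by
  have hpi : p ^ i = p ^ k * p ^ (i - k) := by rw [← pow_add]; congr 1; omega
  rw [digit, digit, hpi, ← Nat.div_div_eq_div_mul, Nat.mul_add_div (by omega),
    Nat.div_eq_of_lt hr, add_zero]

lemma digit_mul_add_zero {p r : ℕ} (M : ℕ) (hr : r < p) : digit p (p * M + r) 0 = r := by
  simp [digit, Nat.mod_eq_of_lt hr]

lemma digit_mul_add_of_pos {p r i : ℕ} (M : ℕ) (hr : r < p) (hi : 0 < i) :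
    digit p (p * M + r) i = digit p M (i - 1) := by
  simpa using digit_pow_mul_add_of_le (k := 1) M (by simpa using hr) hi

lemma digit_pow_sub_one {p : ℕ} (hp : 0 < p) {n i : ℕ} (hi : i < n) :
    digit p (p ^ n - 1) i = p - 1 := by
  induction n generalizing i with
  | zero => omega
  | succ n ih =>
    have hdecomp : p ^ (n + 1) - 1 = p * (p ^ n - 1) + (p - 1) := by
      have : p ≤ p * p ^ n := Nat.le_mul_of_pos_right p (by positivity)
      rw [pow_succ', Nat.mul_sub_one]; omega
    rcases Nat.eq_zero_or_pos i with rfl | hi0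
    · rw [hdecomp, digit_mul_add_zero _ (by omega)]
    · rw [hdecomp, digit_mul_add_of_pos _ (by omega) hi0]
      exact ih (by omega)

lemma pow_sub_eq_mul_add {p k a : ℕ} (hp : 0 < p) (hk : 0 < k) (ha : a ≤ p) :
    p ^ k - a = p * (p ^ (k - 1) - 1) + (p - a) := by
  have hpk : p ^ k = p * p ^ (k - 1) := by rw [← pow_succ']; congr 1; omega
  have : p ≤ p * p ^ (k - 1) := Nat.le_mul_of_pos_right p (by positivity)
  rw [hpk, Nat.mul_sub_one]
  omega

lemma digit_pow_sub_zero {p k a : ℕ} (hp : 0 < p) (hk : 0 < k) (ha₀ : 0 < a) (ha : a ≤ p) :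
    digit p (p ^ k - a) 0 = p - a := by
  rw [pow_sub_eq_mul_add hp hk ha, digit_mul_add_zero _ (by omega)]

lemma digit_pow_sub_of_pos {p k a i : ℕ} (hp : 0 < p) (ha₀ : 0 < a) (ha : a ≤ p) (hi₀ : 0 < i)
    (hi : i < k) :
    digit p (p ^ k - a) i = p - 1 := by
  rw [pow_sub_eq_mul_add hp (hi₀.trans hi) ha, digit_mul_add_of_pos _ (by omega) hi₀]
  exact digit_pow_sub_one hp (by omega)

lemma sub_one_eq_mul_add {p N : ℕ} (hN : N % p ≠ 0) : N - 1 = p * (N / p) + (N % p - 1) := by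
  have := Nat.mod_add_div N p
  omega

lemma digit_sub_one_zero {p N : ℕ} (hp : 0 < p) (hN : digit p N 0 ≠ 0) :
    digit p (N - 1) 0 + 1 = digit p N 0 := by
  have hN' : N % p ≠ 0 := by simpa [digit] using hN
  have := Nat.mod_lt N hp
  rw [sub_one_eq_mul_add hN', digit_mul_add_zero _ (by omega)]
  simp only [digit, pow_zero, Nat.div_one]
  omega

lemma digit_sub_one_of_pos {p N i : ℕ} (hp : 0 < p) (hN : digit p N 0 ≠ 0) (hi : 0 < i) :
    digit p (N - 1) i = digit p N i := by
  have hN' : N % p ≠ 0 := by simpa [digit] using hN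
  have := Nat.mod_lt N hp
  rw [sub_one_eq_mul_add hN', digit_mul_add_of_pos _ (by omega) hi]
  conv_rhs => rw [← Nat.div_add_mod N p, digit_mul_add_of_pos _ this hi]

lemma mod_pow_eq_digit_zero {p c k : ℕ} (hk : 0 < k)
    (hc : ∀ i, 1 ≤ i → i < k → digit p c i = 0) : c % p ^ k = digit p c 0 := by
  induction k with
  | zero => omega
  | succ k ih =>
    rcases Nat.eq_zero_or_pos k with rfl | hk₀
    · simp [digit]
    · have hck : c / p ^ k % p = 0 := hc k hk₀ (by omega)
      rw [Nat.mod_pow_succ, ih hk₀ fun i hi hik => hc i hi (by omega), hck, mul_zero, add_zero]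

lemma eq_pow_mul_add_digit_zero {p c k : ℕ} (hk : 0 < k)
    (hc : ∀ i, 1 ≤ i → i < k → digit p c i = 0) : c = p ^ k * (c / p ^ k) + digit p c 0 := by
  rw [← mod_pow_eq_digit_zero hk hc, Nat.div_add_mod]

lemma sub_two_mul_digit_zero_eq {p c k : ℕ} (hp : 0 < p) (hk : 0 < k) (hck : digit p c k ≠ 0)
    (hc : ∀ i, 1 ≤ i → i < k → digit p c i = 0) :
    c - 2 * digit p c 0 = p ^ k * (c / p ^ k - 1) + (p ^ k - digit p c 0) := by
  obtain ⟨M, hM⟩ : ∃ M, c / p ^ k = M + 1 :=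
    Nat.exists_eq_add_one.mpr (Nat.pos_of_ne_zero fun h => hck (by simp [digit, h]))
  have hc₀ : digit p c 0 < p ^ k := (digit_lt hp c 0).trans_le (Nat.le_self_pow hk.ne' p)
  have hdecomp := eq_pow_mul_add_digit_zero hk hc
  rw [hM, mul_add_one] at hdecomp
  rw [hM, Nat.add_sub_cancel]
  omega

lemma digit_eq_digit_div_pow {p c k i : ℕ} (hi : k ≤ i) :
    digit p c i = digit p (c / p ^ k) (i - k) := by
  rw [digit, digit, Nat.div_div_eq_div_mul, ← pow_add, Nat.add_sub_cancel' hi]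

section SubTwoMulDigitZero

variable {p c k : ℕ}

lemma digit_sub_two_mul_digit_zero_zero_add (hp : 0 < p) (hk : 0 < k) (hc0 : digit p c 0 ≠ 0)
    (hck : digit p c k ≠ 0) (hc : ∀ i, 1 ≤ i → i < k → digit p c i = 0) :
    digit p (c - 2 * digit p c 0) 0 + digit p c 0 = p := by
  have hc₀ := digit_lt hp c 0
  rw [sub_two_mul_digit_zero_eq hp hk hck hc,
    digit_pow_mul_add_of_lt _ (Nat.sub_lt (by positivity) (Nat.pos_of_ne_zero hc0)) hk,
    digit_pow_sub_zero hp hk (Nat.pos_of_ne_zero hc0) hc₀.le]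
  omega

lemma digit_sub_two_mul_digit_zero_of_lt (hp : 0 < p) (hc0 : digit p c 0 ≠ 0)
    (hck : digit p c k ≠ 0) (hc : ∀ i, 1 ≤ i → i < k → digit p c i = 0) {i : ℕ} (hi₀ : 1 ≤ i)
    (hi : i < k) : digit p (c - 2 * digit p c 0) i = p - 1 := by
  rw [sub_two_mul_digit_zero_eq hp (by omega) hck hc,
    digit_pow_mul_add_of_lt _ (Nat.sub_lt (by positivity) (Nat.pos_of_ne_zero hc0)) hi,
    digit_pow_sub_of_pos hp (Nat.pos_of_ne_zero hc0) (digit_lt hp c 0).le hi₀ hi]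

lemma digit_sub_two_mul_digit_zero_of_le (hp : 0 < p) (hk : 0 < k) (hc0 : digit p c 0 ≠ 0)
    (hck : digit p c k ≠ 0) (hc : ∀ i, 1 ≤ i → i < k → digit p c i = 0) {i : ℕ} (hi : k ≤ i) :
    digit p (c - 2 * digit p c 0) i = digit p (c / p ^ k - 1) (i - k) := by
  rw [sub_two_mul_digit_zero_eq hp hk hck hc,
    digit_pow_mul_add_of_le _ (Nat.sub_lt (by positivity) (Nat.pos_of_ne_zero hc0)) hi]

lemma digit_sub_two_mul_digit_zero_self_add_one (hp : 0 < p) (hk : 0 < k)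
    (hc0 : digit p c 0 ≠ 0) (hck : digit p c k ≠ 0) (hc : ∀ i, 1 ≤ i → i < k → digit p c i = 0) :
    digit p (c - 2 * digit p c 0) k + 1 = digit p c k := by
  rw [digit_sub_two_mul_digit_zero_of_le hp hk hc0 hck hc le_rfl,
    digit_eq_digit_div_pow (c := c) le_rfl, Nat.sub_self]
  exact digit_sub_one_zero hp (by simpa [digit] using hck)

lemma digit_sub_two_mul_digit_zero_of_gt (hp : 0 < p) (hk : 0 < k) (hc0 : digit p c 0 ≠ 0)
    (hck : digit p c k ≠ 0) (hc : ∀ i, 1 ≤ i → i < k → digit p c i = 0) {i : ℕ} (hi : k < i) :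
    digit p (c - 2 * digit p c 0) i = digit p c i := by
  rw [digit_sub_two_mul_digit_zero_of_le hp hk hc0 hck hc hi.le, digit_eq_digit_div_pow hi.le]
  exact digit_sub_one_of_pos hp (by simpa [digit] using hck) (by omega)

end SubTwoMulDigitZero

lemma range_subset_of_isAdmissible {p c k : ℕ} {I : Finset ℕ} (hI : IsAdmissible p c I)
    (h0 : 0 ∈ I) (hc : ∀ i, 1 ≤ i → i < k → digit p c i = p - 1) : range k ⊆ I := by
  intro i hi
  induction i with
  | zero => exact h0
  | succ i ih =>
    by_contra hiI
    have hik : i + 1 < k := mem_range.mp hi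
    exact hI.2 (i + 1) hiI (by omega) (ih (mem_range.mpr (by omega))) (hc _ (by omega) hik)

lemma le_of_mem_of_isAdmissible {p c k : ℕ} {J : Finset ℕ} (hJ : IsAdmissible p c J)
    (h0 : 0 ∉ J) (hc : ∀ i, 1 ≤ i → i < k → digit p c i = 0) : ∀ i ∈ J, k ≤ i := by
  intro i hi
  induction i using Nat.strong_induction_on with
  | _ i ih =>
    by_contra hik
    have hi0 : i ≠ 0 := by rintro rfl; exact h0 hi
    have hprev : i - 1 ∉ J := fun h => hik ((ih (i - 1) (by omega) h).trans (by omega))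
    exact hJ.1 i hi (Or.inr hprev) (hc i (by omega) (by omega))

lemma disjoint_range_of_le {k : ℕ} {J : Finset ℕ} (hJ : ∀ i ∈ J, k ≤ i) :
    Disjoint J (range k) :=
  disjoint_left.mpr fun i hi hr => by have := hJ i hi; simp at hr; omega

lemma isAdmissible_union_range_iff {p c c' k : ℕ} {J : Finset ℕ} (hk : 0 < k)
    (hJ : ∀ i ∈ J, k ≤ i) (hc'0 : digit p c' 0 ≠ 0) (hc'k : digit p c' k ≠ p - 1)
    (hck : digit p c k ≠ 0) (hgt : ∀ i, k < i → digit p c' i = digit p c i) :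
    IsAdmissible p c' (J ∪ range k) ↔ IsAdmissible p c J := by
  have hJk : ∀ i, i < k → i ∉ J := fun i hi h => by have := hJ i h; omega
  unfold IsAdmissible
  refine and_congr (forall_congr' fun i => ?_) (forall_congr' fun i => ?_) <;>
    simp only [mem_union, mem_range] <;> rcases lt_trichotomy i k with hi | hi | hi
  · have := hJk i hi
    rcases Nat.eq_zero_or_pos i with rfl | hi0
    · simp [hc'0, this]
    · simp [this, hi, hi0.ne', show i - 1 < k by omega]
  · subst i
    simp [hck, show k - 1 < k by omega, show k ≠ 0 by omega]
  · simp only [hgt i hi, show ¬i < k by omega, show ¬i - 1 < k by omega, or_false]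
  · simp [hJk i hi, hJk (i - 1) (by omega), not_le.mpr hi]
  · subst i
    simp [hJk (k - 1) (by omega), show k - 1 < k by omega, hc'k]
  · simp only [hgt i hi, show ¬i < k by omega, show ¬i - 1 < k by omega, or_false]

lemma deltaC_union_range {p c c' k : ℕ} {J : Finset ℕ} (hp : 0 < p) (hk : 0 < k)
    (hJ : ∀ i ∈ J, k ≤ i) (hc0 : digit p c 0 ≠ 0) (hc'0 : digit p c' 0 + digit p c 0 = p)
    (hc'lt : ∀ i, 1 ≤ i → i < k → digit p c' i = p - 1)
    (hc'k : digit p c' k + 1 = digit p c k) (hgt : ∀ i, k < i → digit p c' i = digit p c i) :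
    deltaC p c' (J ∪ range k) = deltaC p c J + digit p c 0 := by
  have hJk : ∀ i, i < k → i ∉ J := fun i hi h => by have := hJ i h; omega
  have hsum_range : ∑ i ∈ range k, (p - 1 - digit p c' i) * p ^ i = digit p c 0 - 1 := by
    rw [sum_eq_single_of_mem 0 (mem_range.mpr hk)]
    · simp only [pow_zero, mul_one]; omega
    · intro i hi hi0
      simp [hc'lt i (Nat.one_le_iff_ne_zero.mpr hi0) (mem_range.mp hi)]
  have hsum_J : ∑ i ∈ J, (p - 1 - digit p c' i) * p ^ i
      = ∑ i ∈ J, (p - 1 - digit p c i) * p ^ i + if k ∈ J then p ^ k else 0 := by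
    rw [← sum_ite_eq' J k (fun i => p ^ i), ← sum_add_distrib]
    refine sum_congr rfl fun i hi => ?_
    rcases (hJ i hi).eq_or_lt with rfl | hlt
    · have := digit_lt hp c k
      rw [if_pos rfl, ← add_one_mul]
      congr 1
      omega
    · simp [hgt i hlt, hlt.ne']
  have hstarts : (J ∪ range k).filter (fun i => i = 0 ∨ i - 1 ∉ J ∪ range k)
      = insert 0 ((J.filter fun i => i = 0 ∨ i - 1 ∉ J).erase k) := by
    ext i
    simp only [mem_filter, mem_union, mem_range, mem_insert, mem_erase]
    rcases Nat.eq_zero_or_pos i with rfl | hi0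
    · simpa [hJk 0 hk] using hk
    · simp only [hi0.ne', false_or, not_or]
      constructor
      · rintro ⟨hi | hi, hprev, hprevk⟩
        · exact ⟨by omega, hi, hprev⟩
        · omega
      · rintro ⟨hik, hi, hprev⟩
        exact ⟨Or.inl hi, hprev, by have := hJ i hi; omega⟩
  have hstarts_sum : ∑ i ∈ J.filter (fun i => i = 0 ∨ i - 1 ∉ J), p ^ i
      = ∑ i ∈ (J.filter fun i => i = 0 ∨ i - 1 ∉ J).erase k, p ^ i
        + if k ∈ J then p ^ k else 0 := by
    by_cases hkJ : k ∈ J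
    · rw [if_pos hkJ, sum_erase_add]
      exact mem_filter.mpr ⟨hkJ, Or.inr (hJk (k - 1) (by omega))⟩
    · rw [if_neg hkJ, erase_eq_of_notMem fun h => hkJ (mem_filter.mp h).1, add_zero]
  unfold deltaC
  rw [sum_union (disjoint_range_of_le hJ), hsum_range, hsum_J,
    hstarts, sum_insert (by simp [hJk 0 hk]), hstarts_sum, pow_zero]
  omega

lemma union_range_mem_iff {p c c' k b : ℕ} {J : Finset ℕ} (hp : 0 < p) (hk : 0 < k)
    (hJ : ∀ i ∈ J, k ≤ i) (hc0 : digit p c 0 ≠ 0) (hck : digit p c k ≠ 0)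
    (hc'0 : digit p c' 0 + digit p c 0 = p)
    (hc'lt : ∀ i, 1 ≤ i → i < k → digit p c' i = p - 1)
    (hc'k : digit p c' k + 1 = digit p c k) (hgt : ∀ i, k < i → digit p c' i = digit p c i) :
    (IsAdmissible p c' (J ∪ range k) ∧ 0 ∈ J ∪ range k ∧
        deltaC p c' (J ∪ range k) ≤ b + digit p c 0) ↔
      (IsAdmissible p c J ∧ 0 ∉ J ∧ deltaC p c J ≤ b) := by
  have hc'0_ne : digit p c' 0 ≠ 0 := by have := digit_lt hp c 0; omega
  have hc'k_ne : digit p c' k ≠ p - 1 := by have := digit_lt hp c k; omega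
  rw [isAdmissible_union_range_iff hk hJ hc'0_ne hc'k_ne hck hgt,
    deltaC_union_range hp hk hJ hc0 hc'0 hc'lt hc'k hgt]
  have h0J : 0 ∉ J := fun h => by have := hJ 0 h; omega
  simp [h0J, hk]

theorem admissible_bounded_bijection_general (p : ℕ)
    (c : ℕ) (hc0 : digit p c 0 ≠ 0)
    (k : ℕ) (hk1 : 1 ≤ k) (hk2 : digit p c k ≠ 0)
    (hkmin : ∀ j, 1 ≤ j → j < k → digit p c j = 0) :
    ∀ b : ℕ,
      Set.BijOn (fun I : Finset ℕ => I \ Finset.range k)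
        {I : Finset ℕ | IsAdmissible p (c - 2 * digit p c 0) I ∧ 0 ∈ I ∧
          deltaC p (c - 2 * digit p c 0) I ≤ b + digit p c 0}
        {J : Finset ℕ | IsAdmissible p c J ∧ 0 ∉ J ∧ deltaC p c J ≤ b} := by
  intro b
  have hp : 0 < p := pos_of_digit_ne_zero (by omega) hk2
  have hc'lt : ∀ i, 1 ≤ i → i < k → digit p (c - 2 * digit p c 0) i = p - 1 :=
    fun _ => digit_sub_two_mul_digit_zero_of_lt hp hc0 hk2 hkmin
  have hmem (J : Finset ℕ) (hJ : ∀ i ∈ J, k ≤ i) :=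
    union_range_mem_iff (b := b) hp hk1 hJ hc0 hk2
      (digit_sub_two_mul_digit_zero_zero_add hp hk1 hc0 hk2 hkmin) hc'lt
      (digit_sub_two_mul_digit_zero_self_add_one hp hk1 hc0 hk2 hkmin)
      (fun _ => digit_sub_two_mul_digit_zero_of_gt hp hk1 hc0 hk2 hkmin)
  refine Set.InvOn.bijOn (f' := fun J => J ∪ range k) ⟨?_, ?_⟩ ?_ ?_
  · rintro I ⟨hI, h0I, -⟩
    exact sdiff_union_of_subset (range_subset_of_isAdmissible hI h0I hc'lt)
  · rintro J ⟨hJ, h0J, -⟩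
    exact union_sdiff_cancel_right
      (disjoint_range_of_le (le_of_mem_of_isAdmissible hJ h0J hkmin))
  · intro I hI
    have hsub := range_subset_of_isAdmissible hI.1 hI.2.1 hc'lt
    refine (hmem _ fun i hi => by simpa using (mem_sdiff.mp hi).2).mp ?_
    rwa [sdiff_union_of_subset hsub]
  · intro J hJ
    exact (hmem J (le_of_mem_of_isAdmissible hJ.1 hJ.2.1 hkmin)).mpr hJ

/-- Let `p` be an odd prime and `c` a positive integer with `c₀ = c mod p ≠ 0` having a
nonzero digit `c_j`, `j ≥ 1`; let `k` be minimal such `j` and `c' = c - 2c₀`. Then for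
every `b : ℕ`, the map `I ↦ I \ {0,…,k-1}` restricts to a bijection from
`{I finite, c'-admissible, 0 ∈ I, δ_{c'}(I) ≤ b + c₀}` onto
`{J finite, c-admissible, 0 ∉ J, δ_c(J) ≤ b}`. -/
theorem admissible_bounded_bijection (p : ℕ) (hp : p.Prime) (hodd : Odd p)
    (c : ℕ) (hc : 0 < c) (hc0 : digit p c 0 ≠ 0)
    (k : ℕ) (hk1 : 1 ≤ k) (hk2 : digit p c k ≠ 0)
    (hkmin : ∀ j, 1 ≤ j → j < k → digit p c j = 0) :
    ∀ b : ℕ,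
      Set.BijOn (fun I : Finset ℕ => I \ Finset.range k)
        {I : Finset ℕ | IsAdmissible p (c - 2 * digit p c 0) I ∧ 0 ∈ I ∧
          deltaC p (c - 2 * digit p c 0) I ≤ b + digit p c 0}
        {J : Finset ℕ | IsAdmissible p c J ∧ 0 ∉ J ∧ deltaC p c J ≤ b} :=
  admissible_bounded_bijection_general p c hc0 k hk1 hk2 hkmin
end
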